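/- Let α ∈ 𝔇^{(z)}_{σ₁,σ₂}(W) and v ∈ V^{(j₁,j₂)} with j₁, j₂ ∈ ℤ. Then for every n ∈ ℤ, x^{j₁/T}(x+z)^{n+j₂/T} Y_W^*(v, x+z)α ∈ 𝔇^{(z)}_{σ₁,σ₂}(W)[[x, x^{-1}]], i.e., every coefficient of this series is again an element of 𝔇^{(z)}_{σ₁,σ₂}(W). -/

import Mathlib

open scoped BigOperators

noncomputable section

/-- The generalized binomial coefficient `binom(a, n)` for `a : ℂ`, `n : ℕ`. -/
def cbinom (a : ℂ) (n : ℕ) : ℂ := (∏ i ∈ Finset.range n, (a - (i : ℂ))) / (n.factorial : ℂ)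

/-- The argument of a complex number normalized to lie in `[0, 2π)`. -/
def argB (ξ : ℂ) : ℝ := if 0 ≤ Complex.arg ξ then Complex.arg ξ else Complex.arg ξ + 2 * Real.pi

/-- The branch of the logarithm with `log ξ = ln |ξ| + i arg ξ`, `0 ≤ arg ξ < 2π`. -/
def logB (ξ : ℂ) : ℂ := (Real.log ‖ξ‖ : ℂ) + (argB ξ : ℂ) * Complex.I

/-- `ξ ^ α = e^{α log ξ}` with the chosen branch of `log`. -/
def bpow (ξ α : ℂ) : ℂ := Complex.exp (α * logB ξ)

/-- `e^{α π i}`. -/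
def epi (α : ℂ) : ℂ := Complex.exp (α * (Real.pi : ℂ) * Complex.I)

/-!  Formal series are recorded by the coefficient function `f : ℂ → ·`, where `f n` is the
coefficient of `x^{-n-1}`.  The following are the coefficients of the products with
`(x-z)^β`, `(z-x)^β`, `(x+z)^β`, `(z+x)^β` (with the expansion conventions
`(x ± ξ)^β = Σ_{j≥0} binom(β,j) (±ξ)^j x^{β-j}` and
`(ξ ± x)^β = Σ_{j≥0} binom(β,j) ξ^{β-j} (±x)^j`, where `ξ^γ` uses the chosen branch),
and of the substitution `f(x+z)`. -/

/-- Coefficient of `x^{-n-1}` in `(x-z)^β f(x)`. -/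
def mulXZ (z β : ℂ) (f : ℂ → ℂ) (n : ℂ) : ℂ :=
  ∑ᶠ i : ℕ, cbinom β i * (-z) ^ i * f (n + β - (i : ℂ))

/-- Coefficient of `x^{-n-1}` in `(z-x)^β f(x)`. -/
def mulZX (z β : ℂ) (f : ℂ → ℂ) (n : ℂ) : ℂ :=
  ∑ᶠ i : ℕ, cbinom β i * bpow z (β - (i : ℂ)) * (-1 : ℂ) ^ i * f (n + (i : ℂ))

/-- Coefficient of `x^{-n-1}` in `(x+z)^β f(x)`. -/
def mulXpZ (z β : ℂ) (f : ℂ → ℂ) (n : ℂ) : ℂ :=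
  ∑ᶠ i : ℕ, cbinom β i * z ^ i * f (n + β - (i : ℂ))

/-- Coefficient of `x^{-n-1}` in `(z+x)^β f(x)`. -/
def mulZpX (z β : ℂ) (f : ℂ → ℂ) (n : ℂ) : ℂ :=
  ∑ᶠ i : ℕ, cbinom β i * bpow z (β - (i : ℂ)) * f (n + (i : ℂ))

/-- Coefficient of `x^{-n-1}` in `f(x+z) = (e^{z d/dx} f)(x)`. -/
def substZ (z : ℂ) (f : ℂ → ℂ) (n : ℂ) : ℂ :=
  ∑ᶠ i : ℕ, cbinom ((i : ℂ) - n - 1) i * z ^ i * f (n - (i : ℂ))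

/-- A vertex algebra over `ℂ`, presented by its components `Y u n = u_n`, with the
Jacobi identity in (componentwise) Borcherds form. -/
structure VertexAlg (V : Type*) [AddCommGroup V] [Module ℂ V] where
  Y : V →ₗ[ℂ] ℤ → V →ₗ[ℂ] V
  one : V
  trunc : ∀ u v : V, ∃ N : ℤ, ∀ n : ℤ, N ≤ n → Y u n v = 0
  vacuum_eq : ∀ (n : ℤ) (v : V), Y one n v = if n = -1 then v else 0
  create : ∀ (u : V) (n : ℤ), 0 ≤ n → Y u n one = 0
  create' : ∀ u : V, Y u (-1) one = u
  jacobi : ∀ (u v w : V) (a b c : ℤ),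
    (∑ᶠ i : ℕ, ((-1 : ℂ) ^ i * cbinom (a : ℂ) i) •
      (Y u (a + b - (i : ℤ)) (Y v (c + (i : ℤ)) w)
        - ((-1 : ℂ) ^ a) • Y v (a + c - (i : ℤ)) (Y u (b + (i : ℤ)) w)))
    = ∑ᶠ i : ℕ, cbinom (b : ℂ) i • Y (Y u (a + (i : ℤ)) v) (b + c - (i : ℤ)) w

/-- An automorphism of a vertex algebra. -/
structure VAAut {V : Type*} [AddCommGroup V] [Module ℂ V] (A : VertexAlg V) where
  g : V ≃ₗ[ℂ] V
  map_one : g A.one = A.one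
  map_Y : ∀ (u : V) (n : ℤ) (v : V), g (A.Y u n v) = A.Y (g u) n (g v)

/-- `v` lies in the eigenspace `V^j = {v | σ v = e^{2πij/T} v}`. -/
def eig {V : Type*} [AddCommGroup V] [Module ℂ V] {A : VertexAlg V}
    (σ : VAAut A) (T : ℕ) (j : ℤ) (v : V) : Prop :=
  σ.g v = Complex.exp (2 * (Real.pi : ℂ) * Complex.I * (j : ℂ) / (T : ℂ)) • v

/-- A (weak) `σ`-twisted module for a vertex algebra, presented componentwise:
`Y v n` is the coefficient of `x^{-n-1}` in `Y_W(v,x)`; the `σ`-twisted Jacobi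
identity is stated coefficientwise. -/
structure TwistedModule {V : Type*} [AddCommGroup V] [Module ℂ V]
    (W : Type*) [AddCommGroup W] [Module ℂ W]
    (A : VertexAlg V) (σ : VAAut A) (T : ℕ) where
  Y : V →ₗ[ℂ] ℂ → W →ₗ[ℂ] W
  vacuum_eq : ∀ (n : ℂ) (w : W), Y A.one n w = if n = -1 then w else 0
  latt : ∀ (v : V) (n : ℂ), (∀ m : ℤ, n ≠ (m : ℂ) / (T : ℂ)) → Y v n = 0
  eig_supp : ∀ (j : ℤ) (v : V), eig σ T j v →
    ∀ n : ℂ, (∀ m : ℤ, n ≠ (j : ℂ) / (T : ℂ) + (m : ℂ)) → Y v n = 0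
  trunc : ∀ (v : V) (w : W), ∃ N : ℤ, ∀ m : ℤ, N ≤ m → Y v ((m : ℂ) / (T : ℂ)) w = 0
  jacobi : ∀ (j : ℤ) (u : V), eig σ T j u → ∀ (v : V) (w : W) (a b c : ℤ),
    (∑ᶠ i : ℕ, ((-1 : ℂ) ^ i * cbinom (a : ℂ) i) •
      (Y u ((a : ℂ) + (b : ℂ) / (T : ℂ) - (i : ℂ)) (Y v ((c : ℂ) / (T : ℂ) + (i : ℂ)) w)
        - ((-1 : ℂ) ^ a) •
          Y v ((a : ℂ) + (c : ℂ) / (T : ℂ) - (i : ℂ)) (Y u ((b : ℂ) / (T : ℂ) + (i : ℂ)) w)))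
    = if (T : ℤ) ∣ (b - j) then
        (∑ᶠ i : ℕ, cbinom ((b : ℂ) / (T : ℂ)) i •
          Y (A.Y u (a + (i : ℤ)) v) ((b : ℂ) / (T : ℂ) + (c : ℂ) / (T : ℂ) - (i : ℂ)) w)
      else 0

/-- A right `σ`-twisted module for a vertex algebra, presented componentwise
(opposite twisted Jacobi identity, coefficientwise). -/
structure RightTwistedModule {V : Type*} [AddCommGroup V] [Module ℂ V]
    (W : Type*) [AddCommGroup W] [Module ℂ W]
    (A : VertexAlg V) (σ : VAAut A) (T : ℕ) where
  Y : V →ₗ[ℂ] ℂ → W →ₗ[ℂ] W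
  vacuum_eq : ∀ (n : ℂ) (w : W), Y A.one n w = if n = -1 then w else 0
  latt : ∀ (v : V) (n : ℂ), (∀ m : ℤ, n ≠ (m : ℂ) / (T : ℂ)) → Y v n = 0
  trunc : ∀ (v : V) (w : W), ∃ N : ℤ, ∀ m : ℤ, m ≤ N → Y v ((m : ℂ) / (T : ℂ)) w = 0
  jacobi : ∀ (j : ℤ) (u : V), eig σ T j u → ∀ (v : V) (w : W) (a b c : ℤ),
    (∑ᶠ i : ℕ, ((-1 : ℂ) ^ i * cbinom (a : ℂ) i) •
      (Y v ((c : ℂ) / (T : ℂ) + (i : ℂ)) (Y u ((a : ℂ) + (b : ℂ) / (T : ℂ) - (i : ℂ)) w)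
        - ((-1 : ℂ) ^ a) •
          Y u ((b : ℂ) / (T : ℂ) + (i : ℂ)) (Y v ((a : ℂ) + (c : ℂ) / (T : ℂ) - (i : ℂ)) w)))
    = if (T : ℤ) ∣ (b + j) then
        (∑ᶠ i : ℕ, cbinom ((b : ℂ) / (T : ℂ)) i •
          Y (A.Y u (a + (i : ℤ)) v) ((b : ℂ) / (T : ℂ) + (c : ℂ) / (T : ℂ) - (i : ℂ)) w)
      else 0

section DualSetup

variable {V : Type*} [AddCommGroup V] [Module ℂ V] {W : Type*} [AddCommGroup W] [Module ℂ W]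
variable {A : VertexAlg V}

/-- The series `Y_W^*(v,x)α` paired with `w ∈ W`:  `m ↦ ⟨α, (Y_W v)_m w⟩`. -/
def Ydual (YW : V →ₗ[ℂ] ℂ → W →ₗ[ℂ] W) (v : V) (α : W → ℂ) (w : W) : ℂ → ℂ :=
  fun m => α (YW v m w)

/-- The condition `x^{j₂/T}(x-z)^{k+j₁/T} Y_W^*(v,x)α ∈ W^*((x))` (integer exponents and
lower truncation in `x`, uniformly in `w`). -/
def DCond (T : ℕ) (z : ℂ) (j₁ j₂ : ℤ) (YW : V →ₗ[ℂ] ℂ → W →ₗ[ℂ] W)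
    (v : V) (α : W → ℂ) (k : ℕ) : Prop :=
  (∀ n : ℂ, (∀ m : ℤ, n ≠ (m : ℂ)) → ∀ w : W,
    mulXZ z ((k : ℂ) + (j₁ : ℂ) / (T : ℂ)) (Ydual YW v α w) (n + (j₂ : ℂ) / (T : ℂ)) = 0) ∧
  (∃ N : ℤ, ∀ m : ℤ, N ≤ m → ∀ w : W,
    mulXZ z ((k : ℂ) + (j₁ : ℂ) / (T : ℂ)) (Ydual YW v α w) ((m : ℂ) + (j₂ : ℂ) / (T : ℂ)) = 0)

/-- The space `𝔇^{(z)}_{σ₁,σ₂}(W) ⊆ W^*`:  linear functionals `α` such that for every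
`v ∈ V^{(j₁,j₂)}` there is `k ∈ ℕ` with `x^{j₂/T}(x-z)^{k+j₁/T} Y_W^*(v,x)α ∈ W^*((x))`. -/
def Dspace (σ₁ σ₂ : VAAut A) (T : ℕ) (YW : V →ₗ[ℂ] ℂ → W →ₗ[ℂ] W) (z : ℂ) :
    Set (W → ℂ) :=
  { α | IsLinearMap ℂ α ∧ ∀ (j₁ j₂ : ℤ) (v : V), eig σ₁ T j₁ v → eig σ₂ T j₂ v →
      ∃ k : ℕ, DCond T z j₁ j₂ YW v α k }

/-- `YR` is the operation `Y_σ^R` on `𝔇^{(z)}_{σ₁,σ₂}(W)`:  it is linear in `v`, for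
`v ∈ V^{(j₁,j₂)}` and `α ∈ 𝔇` the series `Y_σ^R(v,x)α` has exponent support in
`x^{-j₂/T}(·)((x))`-form, and for every admissible `k ∈ ℕ`
`e^{(k+j₁/T)πi}(z-x)^{k+j₁/T} Y_σ^R(v,x)α = (x-z)^{k+j₁/T} Y_W^*(v,x)α`. -/
def IsYR (σ₁ σ₂ : VAAut A) (T : ℕ) (YW : V →ₗ[ℂ] ℂ → W →ₗ[ℂ] W) (z : ℂ)
    (YR : V → ℂ → (W → ℂ) → W → ℂ) : Prop :=
  (∀ (n : ℂ) (α : W → ℂ), IsLinearMap ℂ fun v => YR v n α) ∧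
  (∀ (j₁ j₂ : ℤ) (v : V), eig σ₁ T j₁ v → eig σ₂ T j₂ v →
    ∀ α ∈ Dspace σ₁ σ₂ T YW z,
      (∀ n : ℂ, (∀ m : ℤ, n ≠ (j₂ : ℂ) / (T : ℂ) + (m : ℂ)) → YR v n α = 0) ∧
      (∃ N : ℤ, ∀ m : ℤ, N ≤ m → YR v ((j₂ : ℂ) / (T : ℂ) + (m : ℂ)) α = 0) ∧
      (∀ k : ℕ, DCond T z j₁ j₂ YW v α k → ∀ (n : ℂ) (w : W),
        epi ((k : ℂ) + (j₁ : ℂ) / (T : ℂ)) *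
            mulZX z ((k : ℂ) + (j₁ : ℂ) / (T : ℂ)) (fun m => YR v m α w) n
          = mulXZ z ((k : ℂ) + (j₁ : ℂ) / (T : ℂ)) (Ydual YW v α w) n))

/-- The condition `x^{j₁/T}(x+z)^{l+j₂/T} Y_W^*(v,x+z)α ∈ W^*((x))`. -/
def LCond (T : ℕ) (z : ℂ) (j₁ j₂ : ℤ) (YW : V →ₗ[ℂ] ℂ → W →ₗ[ℂ] W)
    (v : V) (α : W → ℂ) (l : ℕ) : Prop :=
  (∀ n : ℂ, (∀ m : ℤ, n ≠ (m : ℂ)) → ∀ w : W,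
    mulXpZ z ((l : ℂ) + (j₂ : ℂ) / (T : ℂ)) (substZ z (Ydual YW v α w))
      (n + (j₁ : ℂ) / (T : ℂ)) = 0) ∧
  (∃ N : ℤ, ∀ m : ℤ, N ≤ m → ∀ w : W,
    mulXpZ z ((l : ℂ) + (j₂ : ℂ) / (T : ℂ)) (substZ z (Ydual YW v α w))
      ((m : ℂ) + (j₁ : ℂ) / (T : ℂ)) = 0)

/-- `YL` is the operation `Y_σ^L` on `𝔇^{(z)}_{σ₁,σ₂}(W)`:  linear in `v`, with exponent
support in `x^{-j₁/T}(·)((x))`-form, and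
`(z+x)^{l+j₂/T} Y_σ^L(v,x)α = (x+z)^{l+j₂/T} Y_W^*(v,x+z)α` for every admissible `l ∈ ℕ`. -/
def IsYL (σ₁ σ₂ : VAAut A) (T : ℕ) (YW : V →ₗ[ℂ] ℂ → W →ₗ[ℂ] W) (z : ℂ)
    (YL : V → ℂ → (W → ℂ) → W → ℂ) : Prop :=
  (∀ (n : ℂ) (α : W → ℂ), IsLinearMap ℂ fun v => YL v n α) ∧
  (∀ (j₁ j₂ : ℤ) (v : V), eig σ₁ T j₁ v → eig σ₂ T j₂ v →
    ∀ α ∈ Dspace σ₁ σ₂ T YW z,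
      (∀ n : ℂ, (∀ m : ℤ, n ≠ (j₁ : ℂ) / (T : ℂ) + (m : ℂ)) → YL v n α = 0) ∧
      (∃ N : ℤ, ∀ m : ℤ, N ≤ m → YL v ((j₁ : ℂ) / (T : ℂ) + (m : ℂ)) α = 0) ∧
      (∀ l : ℕ, LCond T z j₁ j₂ YW v α l → ∀ (n : ℂ) (w : W),
        mulZpX z ((l : ℂ) + (j₂ : ℂ) / (T : ℂ)) (fun m => YL v m α w) n
          = mulXpZ z ((l : ℂ) + (j₂ : ℂ) / (T : ℂ)) (substZ z (Ydual YW v α w)) n))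

end DualSetup

/-!
The residue identity `Res_x x^μ (x+z)^ν f(x+z) = Res_y y^ν (y-z)^μ f(y)` turns
the coefficient into `β(w) = Res_x x^ν (x-z)^μ ⟨α, Y_W(v,x)w⟩` with `μ = m + j₁/T`,
`ν = n + j₂/T`; as `v` is a `σ`-eigenvector this vanishes unless `m ∈ ℤ`. For
`u ∈ V^{(j₁',j₂')}`, the coefficients of `(x₁-z)^{k+j₁'/T} Y_W^*(u,x₁)β` are obtained by
swapping two residues, and the commutator formula of the right twisted module rewrites
`Y_W(v,x₂)Y_W(u,x₁)` as `Y_W(u,x₁)Y_W(v,x₂)` plus finitely many terms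
`binom(x₁,ι) Y_W(u_ι v, x₁+x₂-ι)`. The first term is killed by the condition on `α` and `u`. In
the others, expanding `binom(x₁,ι)` around `x₁ = z` merges the two powers of `x - z` into powers
`k + m - a + (j₁+j₁')/T` with `a ≤ ι`, which are killed by the condition on `α` and `u_ι v` once
`k` is large.
-/

open Finset

theorem finsum_eq_sum_range_of_forall_le {M : Type*} [AddCommMonoid M] {f : ℕ → M} {B : ℕ}
    (hf : ∀ t, B ≤ t → f t = 0) : ∑ᶠ t, f t = ∑ t ∈ range B, f t :=
  finsum_eq_sum_of_support_subset f fun t ht =>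
    mem_range.mpr (not_le.mp fun h => ht (hf t h))

theorem Finset.sum_range_sum_range_eq_sum_antidiagonal {M : Type*} [AddCommMonoid M] (B : ℕ)
    (F : ℕ → ℕ → M) (hF : ∀ t r, B ≤ t + r → F t r = 0) :
    ∑ t ∈ range B, ∑ r ∈ range B, F t r = ∑ ρ ∈ range B, ∑ p ∈ antidiagonal ρ, F p.1 p.2 := by
  rw [← sum_product' (range B) (range B) F,
    ← sum_filter_of_ne (p := fun p : ℕ × ℕ => p.1 + p.2 < B)
      fun p _ hp => not_le.mp fun h => hp (hF _ _ h),
    ← sum_fiberwise_of_maps_to (g := fun p : ℕ × ℕ => p.1 + p.2) (t := range B)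
      fun p hp => by simpa using (mem_filter.mp hp).2]
  refine sum_congr rfl fun ρ hρ => sum_congr ?_ fun _ _ => rfl
  ext ⟨t, r⟩
  simp only [mem_filter, mem_product, mem_range, HasAntidiagonal.mem_antidiagonal] at hρ ⊢
  omega

theorem cbinom_eq_choose : cbinom = Ring.choose := by
  ext a n
  rw [Ring.choose_eq_smul, ← Polynomial.aeval_eq_smeval, Polynomial.aeval_def,
    Polynomial.eval₂_eq_eval_map, descPochhammer_map, descPochhammer_eval_eq_prod_range,
    cbinom, smul_eq_mul, div_eq_inv_mul]

theorem Ring.choose_natCast_sub_one_sub (X : ℂ) (n : ℕ) :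
    Ring.choose ((n : ℂ) - 1 - X) n = (-1) ^ n * Ring.choose X n := by
  have h := Ring.choose_neg (X - n + 1) n
  rw [show X - n + 1 + n - 1 = X by ring, show -(X - n + 1) = (n : ℂ) - 1 - X by ring] at h
  rw [h, Units.smul_def, Int.coe_negOnePow_natCast, zsmul_eq_mul]
  push_cast
  ring

theorem Finset.sum_range_choose_mul_choose (γ : ℂ) {a N : ℕ} (ha : a ≤ N) (F : ℕ → ℂ) :
    ∑ t ∈ range N, Ring.choose γ t * Ring.choose (t : ℂ) a * F t =
      Ring.choose γ a * ∑ x ∈ range (N - a), Ring.choose (γ - a) x * F (a + x) := by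
  obtain ⟨d, rfl⟩ := Nat.exists_eq_add_of_le ha
  rw [Nat.add_sub_cancel_left, sum_range_add, mul_sum, add_eq_right.mpr (sum_eq_zero fun t ht => by
    rw [Ring.choose_natCast, Nat.choose_eq_zero_of_lt (mem_range.mp ht)]; simp)]
  refine sum_congr rfl fun x _ => ?_
  have h := Ring.choose_smul_choose γ (Nat.le_add_right a x)
  rw [Nat.add_sub_cancel_left, nsmul_eq_mul, mul_comm] at h
  rw [Ring.choose_natCast, h]
  ring

/-- Truncation in the index `n` of `x^{-n-1}`: exactly what makes the `finsum`s defining `mulXZ`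
and its relatives finite, instead of silently `0`. -/
def IsLowerTruncated (f : ℂ → ℂ) : Prop :=
  ∀ C : ℂ, ∃ B : ℕ, ∀ t : ℕ, B ≤ t → f (C - t) = 0

namespace IsLowerTruncated

variable {f g : ℂ → ℂ}

theorem zero : IsLowerTruncated fun _ => 0 := fun _ => ⟨0, fun _ _ => rfl⟩

theorem add (hf : IsLowerTruncated f) (hg : IsLowerTruncated g) :
    IsLowerTruncated fun s => f s + g s := fun C => by
  obtain ⟨B, hB⟩ := hf C
  obtain ⟨B', hB'⟩ := hg C
  exact ⟨max B B', fun t ht => by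
    simp only [hB t (le_of_max_le_left ht), hB' t (le_of_max_le_right ht), add_zero]⟩

theorem sum {ι : Type*} {I : Finset ι} {f : ι → ℂ → ℂ} (hf : ∀ i ∈ I, IsLowerTruncated (f i)) :
    IsLowerTruncated fun s => ∑ i ∈ I, f i s := by
  classical
  induction I using Finset.induction_on with
  | empty => simpa using zero
  | insert i I hi ih =>
    simp only [sum_insert hi]
    exact (hf i (mem_insert_self i I)).add (ih fun j hj => hf j (mem_insert_of_mem hj))

theorem mul_left (hf : IsLowerTruncated f) (c : ℂ → ℂ) : IsLowerTruncated fun s => c s * f s :=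
  fun C => (hf C).imp fun _ hB t ht => by simp only [hB t ht, mul_zero]

theorem comp_add_const (hf : IsLowerTruncated f) (c : ℂ) : IsLowerTruncated fun s => f (s + c) :=
  fun C => (hf (C + c)).imp fun _ hB t ht => by simpa only [sub_add_eq_add_sub] using hB t ht

end IsLowerTruncated

section mulXZ

variable {z γ μ ν P : ℂ} {f g : ℂ → ℂ}

theorem mulXZ_eq_sum_range {B : ℕ} (hf : ∀ t : ℕ, B ≤ t → f (ν + γ - t) = 0) :
    mulXZ z γ f ν = ∑ t ∈ range B, Ring.choose γ t * (-z) ^ t * f (ν + γ - t) := by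
  rw [mulXZ, cbinom_eq_choose]
  exact finsum_eq_sum_range_of_forall_le fun t ht => by rw [hf t ht, mul_zero]

theorem mulXZ_congr (h : ∀ t : ℕ, f (ν + γ - t) = g (ν + γ - t)) :
    mulXZ z γ f ν = mulXZ z γ g ν := by
  simp only [mulXZ, h]

theorem mulXZ_comp_add_const (c : ℂ) :
    mulXZ z γ (fun s => f (s + c)) ν = mulXZ z γ f (ν + c) := by
  simp only [mulXZ, sub_add_eq_add_sub, add_right_comm ν γ c]

theorem mulXZ_zero : mulXZ z γ (fun _ => 0) ν = 0 := by
  simp [mulXZ]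

theorem mulXZ_const_mul (c : ℂ) : mulXZ z γ (fun s => c * f s) ν = c * mulXZ z γ f ν := by
  simp only [mulXZ, mul_finsum]
  exact finsum_congr fun t => by ring

theorem mulXZ_add (hf : IsLowerTruncated f) (hg : IsLowerTruncated g) :
    mulXZ z γ (fun s => f s + g s) ν = mulXZ z γ f ν + mulXZ z γ g ν := by
  obtain ⟨B, hB⟩ := (hf.add hg) (ν + γ)
  obtain ⟨Bf, hBf⟩ := hf (ν + γ)
  obtain ⟨Bg, hBg⟩ := hg (ν + γ)
  rw [mulXZ_eq_sum_range (B := max B (max Bf Bg)) fun t ht => hB t (by omega),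
    mulXZ_eq_sum_range (B := max B (max Bf Bg)) fun t ht => hBf t (by omega),
    mulXZ_eq_sum_range (B := max B (max Bf Bg)) fun t ht => hBg t (by omega),
    ← sum_add_distrib]
  simp only [mul_add]

theorem mulXZ_sum {ι : Type*} {I : Finset ι} {f : ι → ℂ → ℂ}
    (hf : ∀ i ∈ I, IsLowerTruncated (f i)) :
    mulXZ z γ (fun s => ∑ i ∈ I, f i s) ν = ∑ i ∈ I, mulXZ z γ (f i) ν := by
  classical
  induction I using Finset.induction_on with
  | empty => simpa using mulXZ_zero
  | insert i I hi ih =>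
    have hI : ∀ j ∈ I, IsLowerTruncated (f j) := fun j hj => hf j (mem_insert_of_mem hj)
    simp only [sum_insert hi]
    rw [mulXZ_add (hf i (mem_insert_self i I)) (IsLowerTruncated.sum hI), ih hI]

theorem IsLowerTruncated.mulXZ (hf : IsLowerTruncated f) : IsLowerTruncated (mulXZ z γ f) :=
  fun C => (hf (C + γ)).imp fun B hB t ht => by
    rw [mulXZ_eq_sum_range (B := 0) fun r _ => by
      rw [show C - t + γ - r = C + γ - (t + r : ℕ) by push_cast; ring]
      exact hB _ (by omega)]
    simp

theorem mulXZ_mulXZ (hf : IsLowerTruncated f) :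
    mulXZ z μ (mulXZ z γ f) ν = mulXZ z (μ + γ) f ν := by
  obtain ⟨B, hB⟩ := hf (ν + (μ + γ))
  have harg : ∀ r t : ℕ, ν + μ - r + γ - t = ν + (μ + γ) - (r + t : ℕ) := fun r t => by
    push_cast; ring
  have hinner : ∀ r : ℕ, mulXZ z γ f (ν + μ - r) =
      ∑ t ∈ range B, Ring.choose γ t * (-z) ^ t * f (ν + (μ + γ) - (r + t : ℕ)) := fun r => by
    rw [mulXZ_eq_sum_range (B := B) fun t ht => by rw [harg]; exact hB _ (by omega)]
    simp only [harg]
  rw [mulXZ_eq_sum_range (B := B) fun r hr => by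
      rw [hinner]; exact sum_eq_zero fun t _ => by rw [hB _ (by omega), mul_zero],
    mulXZ_eq_sum_range hB]
  simp only [hinner, mul_sum]
  rw [sum_range_sum_range_eq_sum_antidiagonal B _ fun r t h => by simp only [hB _ h, mul_zero]]
  refine sum_congr rfl fun ρ _ => ?_
  rw [Ring.add_choose_eq ρ (Commute.all μ γ), sum_mul, sum_mul]
  refine sum_congr rfl fun p hp => ?_
  rw [← HasAntidiagonal.mem_antidiagonal.mp hp, pow_add]
  ring

theorem mulXZ_comm {F : ℂ → ℂ → ℂ} (hF : ∀ s, IsLowerTruncated (F s)) {B : ℕ}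
    (hB : ∀ t : ℕ, B ≤ t → ∀ r, F (P + γ - t) r = 0) :
    mulXZ z γ (fun s => mulXZ z μ (F s) ν) P =
      mulXZ z μ (fun r => mulXZ z γ (fun s => F s r) P) ν := by
  choose R hR using fun t : ℕ => hF (P + γ - t) (ν + μ)
  have hR' : ∀ t ∈ range B, ∀ r : ℕ, (range B).sup R ≤ r → F (P + γ - t) (ν + μ - r) = 0 :=
    fun t ht r hr => hR t r ((le_sup ht).trans hr)
  have hcol : ∀ r : ℕ, mulXZ z γ (fun s => F s (ν + μ - r)) P =
      ∑ t ∈ range B, Ring.choose γ t * (-z) ^ t * F (P + γ - t) (ν + μ - r) :=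
    fun r => mulXZ_eq_sum_range fun t ht => hB t ht _
  rw [mulXZ_eq_sum_range (B := B) fun t ht => by
      rw [show F (P + γ - t) = fun _ => 0 from funext (hB t ht), mulXZ_zero],
    mulXZ_eq_sum_range (B := (range B).sup R) fun r hr => by
      rw [hcol]; exact sum_eq_zero fun t ht => by rw [hR' t ht r hr, mul_zero]]
  simp only [hcol, mul_sum]
  rw [sum_comm]
  refine sum_congr rfl fun t ht => ?_
  rw [mulXZ_eq_sum_range (hR' t ht), mul_sum]
  exact sum_congr rfl fun r _ => by ring

/-- Upper negation and Vandermonde expand `binom(P + γ - t, ι)` in the basis `binom(t, a)`, and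
`binom(γ, t) binom(t, a) = binom(γ, a) binom(γ - a, t - a)` then resums over `t`. -/
theorem mulXZ_choose_mul (hg : IsLowerTruncated g) (ι : ℕ) :
    mulXZ z γ (fun s => Ring.choose s ι * g s) P =
      ∑ p ∈ antidiagonal ι, (-1) ^ ι * Ring.choose ((ι : ℂ) - 1 - (P + γ)) p.2 *
        Ring.choose γ p.1 * (-z) ^ p.1 * mulXZ z (γ - p.1) g P := by
  obtain ⟨B, hB⟩ := hg (P + γ)
  have hreflect : ∀ t : ℕ, Ring.choose (P + γ - t) ι = (-1) ^ ι *
      ∑ p ∈ antidiagonal ι, Ring.choose (t : ℂ) p.1 * Ring.choose ((ι : ℂ) - 1 - (P + γ)) p.2 := by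
    intro t
    have h := Ring.choose_natCast_sub_one_sub (P + γ - t) ι
    rw [show (ι : ℂ) - 1 - (P + γ - t) = t + (ι - 1 - (P + γ)) by ring,
      Ring.add_choose_eq ι (Commute.all _ _)] at h
    rw [h, ← mul_assoc, ← mul_pow, neg_one_mul, neg_neg, one_pow, one_mul]
  rw [mulXZ, cbinom_eq_choose,
    finsum_eq_sum_range_of_forall_le (B := ι + B) fun t ht => by simp [hB t (by omega)]]
  simp only [hreflect, mul_sum, sum_mul]
  rw [sum_comm]
  refine sum_congr rfl fun p hp => ?_
  have hp1 : p.1 ≤ ι + B := by have := HasAntidiagonal.mem_antidiagonal.mp hp; omega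
  rw [mulXZ_eq_sum_range (B := ι + B - p.1) fun x hx => by
      rw [show P + (γ - p.1) - x = P + γ - (p.1 + x : ℕ) by push_cast; ring]
      exact hB _ (by omega)]
  calc _ = (-1) ^ ι * Ring.choose ((ι : ℂ) - 1 - (P + γ)) p.2 *
        ∑ t ∈ range (ι + B), Ring.choose γ t * Ring.choose (t : ℂ) p.1 *
          ((-z) ^ t * g (P + γ - t)) := by
        rw [mul_sum]; exact sum_congr rfl fun t _ => by ring
    _ = _ := by
        rw [sum_range_choose_mul_choose γ hp1, mul_sum, mul_sum, mul_sum]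
        refine sum_congr rfl fun x _ => ?_
        rw [show P + γ - (p.1 + x : ℕ) = P + (γ - p.1) - x by push_cast; ring, pow_add]
        ring

/-- Coefficientwise, `Res_x x^μ (x+z)^ν f(x+z) = Res_y y^ν (y-z)^μ f(y)` is Vandermonde's identity
followed by upper negation. -/
theorem mulXpZ_substZ (hf : IsLowerTruncated f) : mulXpZ z ν (substZ z f) μ = mulXZ z μ f ν := by
  obtain ⟨B, hB⟩ := hf (ν + μ)
  have harg : ∀ i t : ℕ, μ + ν - i - t = ν + μ - (i + t : ℕ) := fun i t => by push_cast; ring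
  have hsubst : ∀ i : ℕ, substZ z f (μ + ν - i) = ∑ t ∈ range B,
      Ring.choose ((t : ℂ) - (μ + ν - i) - 1) t * z ^ t * f (ν + μ - (i + t : ℕ)) := fun i => by
    rw [substZ, cbinom_eq_choose,
      finsum_eq_sum_range_of_forall_le (B := B) fun t ht => by rw [harg, hB _ (by omega), mul_zero]]
    simp only [harg]
  rw [mulXpZ, cbinom_eq_choose, finsum_eq_sum_range_of_forall_le (B := B) fun i hi => by
      rw [hsubst, sum_eq_zero fun t _ => by rw [hB _ (by omega), mul_zero], mul_zero],
    mulXZ_eq_sum_range hB]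
  simp only [hsubst, mul_sum]
  rw [sum_range_sum_range_eq_sum_antidiagonal B _ fun i t h => by simp only [hB _ h, mul_zero]]
  refine sum_congr rfl fun ρ _ => ?_
  calc _ = (∑ p ∈ antidiagonal ρ, Ring.choose ν p.1 * Ring.choose ((ρ : ℂ) - 1 - (μ + ν)) p.2) *
        z ^ ρ * f (ν + μ - ρ) := by
        rw [sum_mul, sum_mul]
        refine sum_congr rfl fun p hp => ?_
        rw [← HasAntidiagonal.mem_antidiagonal.mp hp, pow_add, show (p.2 : ℂ) - (μ + ν - p.1) - 1 =
          ((p.1 + p.2 : ℕ) : ℂ) - 1 - (μ + ν) by push_cast; ring]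
        ring
    _ = _ := by
        rw [← Ring.add_choose_eq ρ (Commute.all _ _),
          show ν + (ρ - 1 - (μ + ν)) = ρ - 1 - μ by ring, Ring.choose_natCast_sub_one_sub, neg_pow]
        ring

theorem mulXZ_add_natCast_eq_zero (hf : IsLowerTruncated f) {δ : ℂ} {N : ℤ}
    (h : ∀ m : ℤ, N ≤ m → mulXZ z γ f (m + δ) = 0) (d : ℕ) (m : ℤ) (hm : N ≤ m) :
    mulXZ z (γ + d) f (m + δ) = 0 := by
  rw [add_comm, ← mulXZ_mulXZ hf]
  refine finsum_eq_zero_of_forall_eq_zero fun t => ?_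
  rcases le_or_gt t d with ht | ht
  · rw [show (m : ℂ) + δ + d - t = ((m + d - t : ℤ) : ℂ) + δ by push_cast; ring,
      h _ (by omega), mul_zero]
  · rw [cbinom_eq_choose, Ring.choose_natCast, Nat.choose_eq_zero_of_lt ht]
    simp

end mulXZ

theorem VertexAlg.exists_Y_natCast_eq_zero {V : Type*} [AddCommGroup V] [Module ℂ V]
    (A : VertexAlg V) (u v : V) : ∃ K : ℕ, ∀ ι : ℕ, K ≤ ι → A.Y u ι v = 0 := by
  obtain ⟨N, hN⟩ := A.trunc u v
  exact ⟨N.toNat, fun ι hι => hN ι (by omega)⟩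

section Eigen

variable {V : Type*} [AddCommGroup V] [Module ℂ V] {A : VertexAlg V} {T : ℕ}

theorem eig_Y {σ : VAAut A} {j j' : ℤ} {u v : V} (hu : eig σ T j u) (hv : eig σ T j' v) (n : ℤ) :
    eig σ T (j + j') (A.Y u n v) := by
  unfold eig at *
  simp only [σ.map_Y, hu, hv, map_smul, LinearMap.smul_apply, Pi.smul_apply, smul_smul,
    ← Complex.exp_add]
  push_cast
  ring_nf

theorem eig_neg_add {σ₁ σ₂ σ : VAAut A} (hσ : ∀ v : V, σ.g (σ₁.g (σ₂.g v)) = v) {j₁ j₂ : ℤ} {v : V}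
    (hv₁ : eig σ₁ T j₁ v) (hv₂ : eig σ₂ T j₂ v) : eig σ T (-(j₁ + j₂)) v := by
  unfold eig at *
  have h := hσ v
  rw [hv₂, map_smul, hv₁, smul_smul, map_smul, ← Complex.exp_add] at h
  rw [eq_inv_smul_iff₀ (Complex.exp_ne_zero _) |>.mpr h, ← Complex.exp_neg]
  push_cast
  ring_nf

end Eigen

namespace RightTwistedModule

variable {V W : Type*} [AddCommGroup V] [Module ℂ V] [AddCommGroup W] [Module ℂ W]
  {A : VertexAlg V} {σ : VAAut A} {T : ℕ} (M : RightTwistedModule W A σ T)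

theorem exists_Y_sub_natCast_eq_zero (hT : 0 < T) (y : V) (w : W) (C : ℂ) :
    ∃ B : ℕ, ∀ t : ℕ, B ≤ t → M.Y y (C - t) w = 0 := by
  have hT0 : (T : ℂ) ≠ 0 := by exact_mod_cast hT.ne'
  by_cases hC : ∃ m : ℤ, C = m / T
  · obtain ⟨m, rfl⟩ := hC
    obtain ⟨N, hN⟩ := M.trunc y w
    refine ⟨(m - N).toNat, fun t ht => ?_⟩
    have hle : m - t * T ≤ N := by nlinarith [Int.self_le_toNat (m - N)]
    rw [show (m : ℂ) / T - t = ((m - t * T : ℤ) : ℂ) / T by push_cast; field_simp]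
    exact hN _ hle
  · refine ⟨0, fun t _ => ?_⟩
    rw [M.latt y (C - t) fun m hm => hC ⟨m + t * T, ?_⟩]
    · rfl
    · rw [← sub_add_cancel C t, hm]
      push_cast
      field_simp

theorem Y_eq_zero_of_forall_ne (hT : 0 < T) {j : ℤ} {y : V} (hy : eig σ T j y) {s : ℂ}
    (hs : ∀ q : ℤ, s ≠ q - j / T) : M.Y y s = 0 := by
  have hT0 : (T : ℂ) ≠ 0 := by exact_mod_cast hT.ne'
  by_cases hsT : ∃ m : ℤ, s = m / T
  swap
  · exact M.latt y s fun m hm => hsT ⟨m, hm⟩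
  obtain ⟨m, rfl⟩ := hsT
  have hndvd : ¬ (T : ℤ) ∣ m + T + j := by
    rintro ⟨q, hq⟩
    refine hs (q - 1) ?_
    rw [eq_sub_iff_add_eq, ← add_div, div_eq_iff hT0]
    have : (m : ℂ) + j = T * q - T := by exact_mod_cast (by linarith : m + j = T * q - T)
    rw [this]; push_cast; ring
  ext w
  have hj := M.jacobi j y hy A.one w (-1) (m + T) (-T)
  rw [if_neg hndvd, finsum_eq_single _ 0 fun i hi => ?_] at hj
  · simpa [M.vacuum_eq, neg_div, add_div, div_self hT0, hT.ne', cbinom_eq_choose] using hj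
  · have hvac : (-1 + -1 - i : ℂ) ≠ -1 := fun h => Nat.succ_ne_zero i <| by
      exact_mod_cast (by push_cast; linear_combination -h : ((i + 1 : ℕ) : ℂ) = 0)
    simp [M.vacuum_eq, neg_div, div_self hT0, hi, hvac]

theorem Y_comm (hT : 0 < T) {j : ℤ} {y : V} (hy : eig σ T j y) {v : V} {K : ℕ}
    (hK : ∀ ι : ℕ, K ≤ ι → A.Y y ι v = 0) (q : ℤ) (r : ℂ) (w : W) :
    M.Y v r (M.Y y (q - j / T) w) = M.Y y (q - j / T) (M.Y v r w) +
      ∑ ι ∈ range K, Ring.choose ((q : ℂ) - j / T) ι • M.Y (A.Y y ι v) (q - j / T + r - ι) w := by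
  have hT0 : (T : ℂ) ≠ 0 := by exact_mod_cast hT.ne'
  have hs : ((q * T - j : ℤ) : ℂ) / T = q - j / T := by push_cast; field_simp
  by_cases hr : ∃ c : ℤ, r = c / T
  swap
  · have hY : ∀ (x : V) (c : ℤ), M.Y x (c / T + r) = 0 := fun x c =>
      M.latt x _ fun m hm => hr ⟨m - c, by push_cast; rw [sub_div, ← hm]; ring⟩
    have hv : M.Y v r = 0 := by simpa using hY v 0
    have hvι : ∀ ι : ℕ, M.Y (A.Y y ι v) (q - j / T + r - ι) = 0 := fun ι => by
      convert hY (A.Y y ι v) ((q - ι) * T - j) using 2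
      push_cast
      field_simp
      ring
    simp [hv, hvι]
  obtain ⟨c, rfl⟩ := hr
  have hj := M.jacobi j y hy v w 0 (q * T - j) c
  rw [if_pos ⟨q, by ring⟩, finsum_eq_single _ 0 fun i hi => by
      rw [Int.cast_zero, cbinom_eq_choose, Ring.choose_zero_pos ℂ (Nat.pos_of_ne_zero hi)]; simp,
    finsum_eq_sum_range_of_forall_le (B := K) fun ι hι => by rw [zero_add, hK ι hι]; simp] at hj
  simp only [hs, Int.cast_zero, zero_add, sub_zero, pow_zero, zpow_zero, one_smul,
    cbinom_eq_choose, Ring.choose_zero_right, mul_one, Nat.cast_zero, add_zero] at hj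
  rw [← hj]
  abel

theorem isLowerTruncated_Ydual (hT : 0 < T) {α : W → ℂ} (hα : α 0 = 0) (y : V) (w : W) :
    IsLowerTruncated (Ydual M.Y y α w) := fun C =>
  (M.exists_Y_sub_natCast_eq_zero hT y w C).imp fun _ hB t ht => by
    simp only [Ydual, hB t ht, hα]

theorem mulXZ_Ydual_eq_zero_of_forall_ne (hT : 0 < T) {β : W → ℂ} (hβ : β 0 = 0) {j : ℤ} {y : V}
    (hy : eig σ T j y) {z γ Q : ℂ} (hQ : ∀ (q : ℤ) (t : ℕ), Q + γ - t ≠ q - j / T) (w : W) :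
    mulXZ z γ (Ydual M.Y y β w) Q = 0 := by
  rw [mulXZ_eq_sum_range (B := 0) fun t _ => ?_, sum_range_zero]
  simp only [Ydual, M.Y_eq_zero_of_forall_ne hT hy (hQ · t), LinearMap.zero_apply, hβ]

theorem isLinearMap_mulXZ_Ydual (hT : 0 < T) {α : W → ℂ} (hα : IsLinearMap ℂ α) (v : V)
    (z μ ν : ℂ) : IsLinearMap ℂ fun w => mulXZ z μ (Ydual M.Y v α w) ν where
  map_add w₁ w₂ := by
    have hlt := M.isLowerTruncated_Ydual hT hα.map_zero v
    rw [← mulXZ_add (hlt w₁) (hlt w₂)]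
    congr 1
    funext s
    simp only [Ydual, map_add, hα.map_add]
  map_smul c w := by
    rw [smul_eq_mul, ← mulXZ_const_mul]
    congr 1
    funext s
    simp only [Ydual, map_smul, hα.map_smul, smul_eq_mul]

section Commutator

variable {α : W → ℂ} {j : ℤ} {u v : V} {K : ℕ} {z γ μ ν P : ℂ}

theorem mulXZ_Y_Y_eq (hT : 0 < T) (hα : IsLinearMap ℂ α) (hu : eig σ T j u)
    (hK : ∀ ι : ℕ, K ≤ ι → A.Y u ι v = 0) (hP : ∃ q : ℤ, P + γ = q - j / T) (w : W) (r : ℂ) :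
    mulXZ z γ (fun s => α (M.Y v r (M.Y u s w))) P =
      mulXZ z γ (Ydual M.Y u α (M.Y v r w)) P +
        ∑ ι ∈ range K, ∑ p ∈ antidiagonal ι, (-1) ^ ι *
          Ring.choose ((ι : ℂ) - 1 - (P + γ)) p.2 * Ring.choose γ p.1 * (-z) ^ p.1 *
            mulXZ z (γ - p.1) (Ydual M.Y (A.Y u ι v) α w) (r + (P - ι)) := by
  obtain ⟨q, hq⟩ := hP
  have hlt := M.isLowerTruncated_Ydual hT hα.map_zero
  have hsum : ∀ f : ℕ → W, α (∑ ι ∈ range K, f ι) = ∑ ι ∈ range K, α (f ι) :=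
    fun f => map_sum (IsLinearMap.mk' α hα) f _
  rw [mulXZ_congr (g := fun s => Ydual M.Y u α (M.Y v r w) s +
      ∑ ι ∈ range K, Ring.choose s ι * Ydual M.Y (A.Y u ι v) α w (s + (r - ι))) fun t => by
    rw [show P + γ - t = ((q - t : ℤ) : ℂ) - j / T by push_cast; rw [hq]; ring, M.Y_comm hT hu hK]
    simp only [Ydual, hα.map_add, hsum, hα.map_smul, smul_eq_mul, add_sub_assoc]]
  rw [mulXZ_add (hlt u _) (IsLowerTruncated.sum fun ι _ => ((hlt _ w).comp_add_const _).mul_left _),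
    mulXZ_sum fun ι _ => ((hlt _ w).comp_add_const _).mul_left _]
  congr 1
  refine sum_congr rfl fun ι _ => ?_
  simp only [mulXZ_choose_mul ((hlt _ w).comp_add_const _), mulXZ_comp_add_const,
    add_sub_left_comm P r]

theorem mulXZ_Ydual_mulXZ_Ydual_eq_zero (hT : 0 < T) (hα : IsLinearMap ℂ α) (hu : eig σ T j u)
    (hK : ∀ ι : ℕ, K ≤ ι → A.Y u ι v = 0) (hP : ∃ q : ℤ, P + γ = q - j / T)
    (hu0 : ∀ w', mulXZ z γ (Ydual M.Y u α w') P = 0) (w : W)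
    (huv0 : ∀ ι < K, ∀ a ≤ ι, mulXZ z (μ + (γ - a)) (Ydual M.Y (A.Y u ι v) α w) (ν + (P - ι)) = 0) :
    mulXZ z γ (Ydual M.Y u (fun w => mulXZ z μ (Ydual M.Y v α w) ν) w) P = 0 := by
  have hlt := M.isLowerTruncated_Ydual hT hα.map_zero
  obtain ⟨B, hB⟩ := M.exists_Y_sub_natCast_eq_zero hT u w (P + γ)
  change mulXZ z γ (fun s => mulXZ z μ (fun r => α (M.Y v r (M.Y u s w))) ν) P = 0
  rw [mulXZ_comm (F := fun s r => α (M.Y v r (M.Y u s w))) (fun s => hlt v (M.Y u s w)) (B := B)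
    fun t ht r => by simp only [hB t ht, map_zero, hα.map_zero]]
  simp only [M.mulXZ_Y_Y_eq hT hα hu hK hP, hu0, zero_add]
  rw [mulXZ_sum fun ι _ => IsLowerTruncated.sum fun p _ =>
    (((hlt _ w).mulXZ).comp_add_const _).mul_left _]
  refine sum_eq_zero fun ι hι => ?_
  rw [mulXZ_sum fun p _ => (((hlt _ w).mulXZ).comp_add_const _).mul_left _]
  refine sum_eq_zero fun p hp => ?_
  rw [mulXZ_const_mul, mulXZ_comp_add_const, mulXZ_mulXZ (hlt _ w),
    huv0 ι (mem_range.mp hι) p.1 (by have := HasAntidiagonal.mem_antidiagonal.mp hp; omega),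
    mul_zero]

end Commutator

theorem exists_DCond_mulXZ_Ydual (hT : 0 < T) {σ₁ σ₂ : VAAut A}
    (hσ : ∀ v : V, σ.g (σ₁.g (σ₂.g v)) = v) {z : ℂ} {α : W → ℂ}
    (hα : α ∈ Dspace σ₁ σ₂ T M.Y z) {j₁ j₂ : ℤ} {v : V} (hv₁ : eig σ₁ T j₁ v)
    (hv₂ : eig σ₂ T j₂ v) (m₀ n : ℤ) {j₁' j₂' : ℤ} {u : V} (hu₁ : eig σ₁ T j₁' u)
    (hu₂ : eig σ₂ T j₂' u) :
    ∃ k, DCond T z j₁' j₂' M.Y u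
      (fun w => mulXZ z (m₀ + j₁ / T) (Ydual M.Y v α w) (n + j₂ / T)) k := by
  obtain ⟨hlin, hD⟩ := hα
  have hlt := M.isLowerTruncated_Ydual hT hlin.map_zero
  have hu := eig_neg_add hσ hu₁ hu₂
  obtain ⟨K, hK⟩ := A.exists_Y_natCast_eq_zero u v
  obtain ⟨k₁, -, N₁, hN₁⟩ := hD j₁' j₂' u hu₁ hu₂
  choose kp hkp using fun ι : ℕ =>
    hD (j₁' + j₁) (j₂' + j₂) (A.Y u ι v) (eig_Y hu₁ hv₁ ι) (eig_Y hu₂ hv₂ ι)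
  choose Np hNp using fun ι => (hkp ι).2
  -- `k` dominates `k₁` and every `kp ι + a - m₀` with `a ≤ ι < K`.
  set k := k₁ + (range K).sup kp + K + m₀.natAbs
  refine ⟨k, fun n' hn' w => ?_,
    max N₁ ((range K).sup fun ι => (Np ι + ι - n).toNat : ℕ), fun m hm w => ?_⟩
  · refine M.mulXZ_Ydual_eq_zero_of_forall_ne hT
      (M.isLinearMap_mulXZ_Ydual hT hlin v _ _ _).map_zero hu (fun q t h => hn' (q - k + t) ?_) w
    push_cast at h ⊢
    linear_combination h
  refine M.mulXZ_Ydual_mulXZ_Ydual_eq_zero hT hlin hu hK ⟨m + k, by push_cast; ring⟩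
    (fun w' => ?_) w fun ι hι a ha => ?_
  · have := mulXZ_add_natCast_eq_zero (hlt u w') (fun m hm => hN₁ m hm w') (k - k₁) m
      (le_of_max_le_left hm)
    rw [Nat.cast_sub (by omega)] at this
    convert this using 2
    ring
  · have hkp : kp ι ≤ (range K).sup kp := le_sup (mem_range.mpr hι)
    have hNp' : (Np ι + ι - n).toNat ≤ (range K).sup fun ι => (Np ι + ι - n).toNat :=
      le_sup (f := fun ι => (Np ι + ι - n).toNat) (mem_range.mpr hι)
    obtain ⟨d, hd⟩ : ∃ d : ℕ, (k : ℤ) + m₀ - a = kp ι + d :=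
      ⟨(k + m₀ - a - kp ι).toNat, by omega⟩
    have := mulXZ_add_natCast_eq_zero (hlt _ w) (fun m hm => hNp ι m hm w) d (m + n - ι)
      (by omega)
    have hd' : (k : ℂ) + m₀ - a = kp ι + d := by exact_mod_cast hd
    convert this using 2
    · push_cast
      linear_combination hd'
    · push_cast
      ring

end RightTwistedModule

theorem zero_mem_Dspace {V W : Type*} [AddCommGroup V] [Module ℂ V] [AddCommGroup W]
    [Module ℂ W] {A : VertexAlg V} (σ₁ σ₂ : VAAut A) (T : ℕ) (YW : V →ₗ[ℂ] ℂ → W →ₗ[ℂ] W)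
    (z : ℂ) : (fun _ => 0) ∈ Dspace σ₁ σ₂ T YW z :=
  ⟨(0 : W →ₗ[ℂ] ℂ).isLinear, fun _ _ _ _ _ =>
    ⟨0, fun _ _ _ => mulXZ_zero, 0, fun _ _ _ => mulXZ_zero⟩⟩

theorem shifted_series_coeff_mem_Dspace_general
    (V : Type*) [AddCommGroup V] [Module ℂ V] (W : Type*) [AddCommGroup W] [Module ℂ W]
    (A : VertexAlg V) (σ₁ σ₂ σ : VAAut A) (T : ℕ) (hT : 0 < T)
    (hσ : ∀ v : V, σ.g (σ₁.g (σ₂.g v)) = v)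
    (z : ℂ)
    (M : RightTwistedModule W A σ T)
    (α : W → ℂ) (hα : α ∈ Dspace σ₁ σ₂ T M.Y z)
    (j₁ j₂ : ℤ) (v : V) (hv₁ : eig σ₁ T j₁ v) (hv₂ : eig σ₂ T j₂ v) :
    ∀ (n : ℤ) (m : ℂ),
      (fun w => mulXpZ z ((n : ℂ) + (j₂ : ℂ) / (T : ℂ)) (substZ z (Ydual M.Y v α w))
          (m + (j₁ : ℂ) / (T : ℂ)))
        ∈ Dspace σ₁ σ₂ T M.Y z := by
  intro n m
  simp_rw [mulXpZ_substZ (M.isLowerTruncated_Ydual hT hα.1.map_zero v _)]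
  by_cases hm : ∃ m₀ : ℤ, m = m₀
  · obtain ⟨m₀, rfl⟩ := hm
    exact ⟨M.isLinearMap_mulXZ_Ydual hT hα.1 v _ _ _, fun _ _ _ hu₁ hu₂ =>
      M.exists_DCond_mulXZ_Ydual hT hσ hα hv₁ hv₂ m₀ n hu₁ hu₂⟩
  · convert zero_mem_Dspace σ₁ σ₂ T M.Y z using 2 with w
    refine M.mulXZ_Ydual_eq_zero_of_forall_ne hT hα.1.map_zero (eig_neg_add hσ hv₁ hv₂)
      (fun q t h => hm ⟨q - n + t, ?_⟩) w
    push_cast at h ⊢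
    linear_combination h

/-- Proposition 3.10.  For `α ∈ 𝔇^{(z)}_{σ₁,σ₂}(W)` and
`v ∈ V^{(j₁,j₂)}`, for every `n ∈ ℤ` all coefficients of the series
`x^{j₁/T}(x+z)^{n+j₂/T} Y_W^*(v, x+z) α` again lie in `𝔇^{(z)}_{σ₁,σ₂}(W)`. -/
theorem shifted_series_coeff_mem_Dspace
    (V : Type*) [AddCommGroup V] [Module ℂ V] (W : Type*) [AddCommGroup W] [Module ℂ W]
    (A : VertexAlg V) (σ₁ σ₂ σ : VAAut A) (T : ℕ) (hT : 0 < T)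
    (hσ₁ : ∀ v : V, (⇑σ₁.g)^[T] v = v) (hσ₂ : ∀ v : V, (⇑σ₂.g)^[T] v = v)
    (hcommAut : ∀ v : V, σ₁.g (σ₂.g v) = σ₂.g (σ₁.g v))
    (hσ : ∀ v : V, σ.g (σ₁.g (σ₂.g v)) = v)
    (z : ℂ) (hz : z ≠ 0)
    (M : RightTwistedModule W A σ T)
    (α : W → ℂ) (hα : α ∈ Dspace σ₁ σ₂ T M.Y z)
    (j₁ j₂ : ℤ) (v : V) (hv₁ : eig σ₁ T j₁ v) (hv₂ : eig σ₂ T j₂ v) :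
    ∀ (n : ℤ) (m : ℂ),
      (fun w => mulXpZ z ((n : ℂ) + (j₂ : ℂ) / (T : ℂ)) (substZ z (Ydual M.Y v α w))
          (m + (j₁ : ℂ) / (T : ℂ)))
        ∈ Dspace σ₁ σ₂ T M.Y z :=
  shifted_series_coeff_mem_Dspace_general V W A σ₁ σ₂ σ T hT hσ z M α hα j₁ j₂ v hv₁ hv₂
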